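/- arXiv:2403.04276 — 3 statements merged into one kernel-verified Lean document; each statement's English description precedes it below -/
import Mathlib

section
/- Let ℐ be an ideal on ω with pseudounion A, let C = ω \ A, and let σ : A → C be an injection. Define m : ω → ω by m(n) = n if n ∈ C and m(n) = σ(n) if n ∈ A. Then for every K ∈ ℐ, the set {n ∈ ω : m(n) ∈ K} is finite. -/
open Set

def IsIdeal (I : Set (Set ℕ)) : Prop :=
  (∀ A ∈ I, ∀ B ⊆ A, B ∈ I) ∧ (∀ A ∈ I, ∀ B ∈ I, A ∪ B ∈ I) ∧
  (∀ A : Set ℕ, A.Finite → A ∈ I) ∧ Set.univ ∉ I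

def IsPseudounion (I : Set (Set ℕ)) (A : Set ℕ) : Prop :=
  Aᶜ.Infinite ∧ ∀ K ∈ I, (K \ A).Finite

def enl {X : Type*} [PseudoMetricSpace X] (B : Set X) (δ : ℝ) : Set X :=
  ⋃ x ∈ B, Metric.ball x δ

def IsBornology {X : Type*} (𝔅 : Set (Set X)) : Prop :=
  (∀ B ∈ 𝔅, ∀ B' ⊆ B, B' ∈ 𝔅) ∧ (∀ B ∈ 𝔅, ∀ B' ∈ 𝔅, B ∪ B' ∈ 𝔅) ∧
  (∀ x : X, ∃ B ∈ 𝔅, x ∈ B)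

def IsBase {X : Type*} (𝔅 𝔅₀ : Set (Set X)) : Prop :=
  𝔅₀ ⊆ 𝔅 ∧ ∀ B ∈ 𝔅, ∃ B₀ ∈ 𝔅₀, B ⊆ B₀

def HasClosedBase {X : Type*} [PseudoMetricSpace X] (𝔅 : Set (Set X)) : Prop :=
  ∃ 𝔅₀, IsBase 𝔅 𝔅₀ ∧ ∀ B ∈ 𝔅₀, IsClosed B

def IGammaCover {X : Type*} [PseudoMetricSpace X] (𝔅 : Set (Set X))
    (I : Set (Set ℕ)) (U : ℕ → Set X) : Prop :=
  (∀ n, IsOpen (U n)) ∧ (⋃ n, U n) = Set.univ ∧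
  ∀ B ∈ 𝔅, ∃ δ : ℕ → ℝ, (∀ n, 0 < δ n) ∧ {n | ¬ enl B (δ n) ⊆ U n} ∈ I

def GammaCover {X : Type*} [PseudoMetricSpace X] (𝔅 : Set (Set X))
    (U : ℕ → Set X) : Prop :=
  (∀ n, IsOpen (U n)) ∧ (⋃ n, U n) = Set.univ ∧
  ∀ B ∈ 𝔅, ∃ n₀ : ℕ, ∃ δ : ℕ → ℝ, ∀ n ≥ n₀, 0 < δ n ∧ enl B (δ n) ⊆ U n

def OBsCover {X : Type*} [PseudoMetricSpace X] (𝔅 : Set (Set X))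
    (𝒰 : Set (Set X)) : Prop :=
  (∀ U ∈ 𝒰, IsOpen U) ∧ Set.univ ∉ 𝒰 ∧ ⋃₀ 𝒰 = Set.univ ∧
  ∀ B ∈ 𝔅, ∃ U ∈ 𝒰, ∃ δ > 0, enl B δ ⊆ U

def IHurewicz {X : Type*} [PseudoMetricSpace X] (𝔅 : Set (Set X))
    (I : Set (Set ℕ)) : Prop :=
  ∀ 𝒰 : ℕ → Set (Set X), (∀ n, OBsCover 𝔅 (𝒰 n)) →
    ∃ V : ℕ → Set (Set X), (∀ n, V n ⊆ 𝒰 n ∧ (V n).Finite) ∧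
      ∀ B ∈ 𝔅, ∃ δ : ℕ → ℝ, (∀ n, 0 < δ n) ∧
        {n | ∀ U ∈ V n, ¬ enl B (δ n) ⊆ U} ∈ I

def BsHurewicz {X : Type*} [PseudoMetricSpace X] (𝔅 : Set (Set X)) : Prop :=
  ∀ 𝒰 : ℕ → Set (Set X), (∀ n, OBsCover 𝔅 (𝒰 n)) →
    ∃ V : ℕ → Set (Set X), (∀ n, V n ⊆ 𝒰 n ∧ (V n).Finite) ∧
      ∀ B ∈ 𝔅, ∃ n₀ : ℕ, ∃ δ : ℕ → ℝ, ∀ n ≥ n₀, 0 < δ n ∧ ∃ U ∈ V n, enl B (δ n) ⊆ U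

theorem Set.Finite.preimage_of_injOn_of_mapsTo_compl {α : Type*} {m : α → α} {A K : Set α}
    (hK : (K \ A).Finite) (hmaps : MapsTo m A Aᶜ) (hinj : InjOn m A) (hfix : ∀ n ∉ A, m n = n) :
    (m ⁻¹' K).Finite := by
  have hin : (m ⁻¹' K ∩ A).Finite :=
    hK.of_injOn (fun n hn => show m n ∈ K \ A from ⟨hn.1, hmaps hn.2⟩)
      (hinj.mono inter_subset_right)
  have hout : (m ⁻¹' K \ A).Finite :=
    hK.subset fun n ⟨hnK, hnA⟩ => ⟨hfix n hnA ▸ hnK, hnA⟩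
  simpa only [inter_union_sdiff] using hin.union hout

theorem pseudounion_reindex_finite_general (I : Set (Set ℕ)) (A : Set ℕ)
    (hA : IsPseudounion I A) (σ m : ℕ → ℕ)
    (hσ : ∀ n ∈ A, σ n ∈ Aᶜ) (hinj : Set.InjOn σ A)
    (hm1 : ∀ n ∈ A, m n = σ n) (hm2 : ∀ n ∉ A, m n = n) :
    ∀ K ∈ I, {n : ℕ | m n ∈ K}.Finite := by
  have hmσ : EqOn σ m A := fun n hn => (hm1 n hn).symm
  intro K hK
  exact (hA.2 K hK).preimage_of_injOn_of_mapsTo_compl (MapsTo.congr hσ hmσ) (hinj.congr hmσ) hm2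

theorem pseudounion_reindex_finite (I : Set (Set ℕ)) (A : Set ℕ)
    (hI : IsIdeal I) (hA : IsPseudounion I A) (σ m : ℕ → ℕ)
    (hσ : ∀ n ∈ A, σ n ∈ Aᶜ) (hinj : Set.InjOn σ A)
    (hm1 : ∀ n ∈ A, m n = σ n) (hm2 : ∀ n ∉ A, m n = n) :
    ∀ K ∈ I, {n : ℕ | m n ∈ K}.Finite :=
  pseudounion_reindex_finite_general I A hA σ m hσ hinj hm1 hm2
end

section
/- Let 𝔅 be a bornology on a metric space X with closed base, and let ℐ be an ideal on ω having a pseudounion. Then every ℐ-γ_{𝔅ˢ}-cover {U_n : n ∈ ω} of X has a subfamily (obtained by a reindexing n ↦ m_n) which is a γ_{𝔅ˢ}-cover of X. -/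
open Set

/-!
Enumerate the infinite set `ω \ A` by `m`. Every `K ∈ ℐ` meets `ω \ A` in a finite set, so
`m⁻¹' K` is finite; in particular, along `m` the exceptional set `{n | B^{δ_n} ⊄ U_n}` of each
`B ∈ 𝔅` becomes finite, which is exactly the γ-condition for `n ↦ U (m n)`.
-/

theorem IsBornology.singleton_mem {X : Type*} {𝔅 : Set (Set X)} (h : IsBornology 𝔅) (x : X) :
    {x} ∈ 𝔅 := by
  obtain ⟨B, hB, hx⟩ := h.2.2 x
  exact h.1 B hB _ (singleton_subset_iff.2 hx)

theorem IsPseudounion.exists_preimage_finite {I : Set (Set ℕ)} {A : Set ℕ}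
    (h : IsPseudounion I A) : ∃ m : ℕ → ℕ, ∀ K ∈ I, (m ⁻¹' K).Finite := by
  have hinf : {n | n ∉ A}.Infinite := h.1
  refine ⟨Nat.nth (· ∉ A), fun K hK => ?_⟩
  have hpre := (h.2 K hK).preimage (Nat.nth_injective hinf).injOn
  exact hpre.subset fun n hn => ⟨hn, Nat.nth_mem_of_infinite hinf n⟩

section

variable {X : Type*} [PseudoMetricSpace X]

theorem mem_enl_of_mem {B : Set X} {x : X} {δ : ℝ} (hx : x ∈ B) (hδ : 0 < δ) : x ∈ enl B δ :=
  mem_biUnion hx (Metric.mem_ball_self hδ)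

theorem IGammaCover.gammaCover_comp {𝔅 : Set (Set X)} {I : Set (Set ℕ)} {U : ℕ → Set X}
    {m : ℕ → ℕ} (hU : IGammaCover 𝔅 I U) (hm : ∀ K ∈ I, (m ⁻¹' K).Finite)
    (h𝔅 : ∀ x, {x} ∈ 𝔅) : GammaCover 𝔅 (U ∘ m) := by
  have hγ : ∀ B ∈ 𝔅, ∃ n₀ : ℕ, ∃ δ : ℕ → ℝ, ∀ n ≥ n₀, 0 < δ n ∧ enl B (δ n) ⊆ U (m n) := by
    intro B hB
    obtain ⟨δ, hδ, hK⟩ := hU.2.2 B hB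
    have hev := (hm _ hK).eventually_cofinite_notMem
    rw [Nat.cofinite_eq_atTop] at hev
    obtain ⟨n₀, hn₀⟩ := hev.exists_forall_of_atTop
    exact ⟨n₀, δ ∘ m, fun n hn => ⟨hδ _, not_not.1 (hn₀ n hn)⟩⟩
  refine ⟨fun n => hU.1 _, eq_univ_of_forall fun x => ?_, hγ⟩
  obtain ⟨n₀, δ, h⟩ := hγ {x} (h𝔅 x)
  obtain ⟨hδ, hsub⟩ := h n₀ le_rfl
  exact mem_iUnion.2 ⟨n₀, hsub (mem_enl_of_mem rfl hδ)⟩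

end

theorem igamma_subcover_gamma_of_pseudounion_general {X : Type*} [MetricSpace X]
    (𝔅 : Set (Set X)) (hB : IsBornology 𝔅)
    (I : Set (Set ℕ)) (hpu : ∃ A, IsPseudounion I A)
    (U : ℕ → Set X) (hU : IGammaCover 𝔅 I U) :
    ∃ m : ℕ → ℕ, GammaCover 𝔅 (fun n => U (m n)) := by
  obtain ⟨A, hA⟩ := hpu
  obtain ⟨m, hm⟩ := hA.exists_preimage_finite
  exact ⟨m, hU.gammaCover_comp hm hB.singleton_mem⟩

theorem igamma_subcover_gamma_of_pseudounion {X : Type*} [MetricSpace X]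
    (𝔅 : Set (Set X)) (hB : IsBornology 𝔅) (hcb : HasClosedBase 𝔅)
    (I : Set (Set ℕ)) (hI : IsIdeal I) (hpu : ∃ A, IsPseudounion I A)
    (U : ℕ → Set X) (hU : IGammaCover 𝔅 I U) :
    ∃ m : ℕ → ℕ, GammaCover 𝔅 (fun n => U (m n)) :=
  igamma_subcover_gamma_of_pseudounion_general 𝔅 hB I hpu U hU
end

section
/- Let 𝔅 be a bornology on a metric space X with closed base 𝔅₀, and let ℐ, 𝒥 be ideals on ω. Suppose every family 𝒜 ⊆ ℐ with |𝒜| ≤ |𝔅₀| admits a function φ : ω → ω such that φ⁻¹(A) ∈ 𝒥 for all A ∈ 𝒜. Then for every ℐ-γ_{𝔅ˢ}-cover {V_n : n ∈ ω} of X there is φ : ω → ω so that {V_{φ(m)} : m ∈ ω} is a 𝒥-γ_{𝔅ˢ}-cover of X. -/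
open Set

/-!
Choose, for every `B` in the base, radii `δ_B` witnessing the `ℐ`-γ-property of `V` at `B`, and let
`A_B ∈ ℐ` be the corresponding exceptional set. There are at most `|𝔅₀|` of these sets, so some
`φ` pulls all of them back into `𝒥`. The radii `δ_B ∘ φ` then witness the `𝒥`-γ-property of
`V ∘ φ` at `B`, since its exceptional set is exactly `φ⁻¹(A_B)`; this passes to all of `𝔅` through
the base, and the cover property follows because no exceptional set is all of `ω`.
-/

theorem subset_enl {X : Type*} [PseudoMetricSpace X] (B : Set X) {δ : ℝ} (hδ : 0 < δ) :
    B ⊆ enl B δ :=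
  fun _ hx => mem_biUnion hx (Metric.mem_ball_self hδ)

theorem enl_mono {X : Type*} [PseudoMetricSpace X] {B B' : Set X} (h : B ⊆ B') (δ : ℝ) :
    enl B δ ⊆ enl B' δ :=
  biUnion_subset_biUnion_left h

section Gamma

variable {X : Type*} [PseudoMetricSpace X] {𝔅 𝔅₀ : Set (Set X)} {J : Set (Set ℕ)}
  {U : ℕ → Set X}

theorem gamma_of_base (hbase : IsBase 𝔅 𝔅₀) (hJ : IsIdeal J)
    (hγ : ∀ B ∈ 𝔅₀, ∃ δ : ℕ → ℝ, (∀ n, 0 < δ n) ∧ {n | ¬ enl B (δ n) ⊆ U n} ∈ J) :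
    ∀ B ∈ 𝔅, ∃ δ : ℕ → ℝ, (∀ n, 0 < δ n) ∧ {n | ¬ enl B (δ n) ⊆ U n} ∈ J := by
  intro B hB
  obtain ⟨B₀, hB₀, hBB₀⟩ := hbase.2 B hB
  obtain ⟨δ, hδ, hbad⟩ := hγ B₀ hB₀
  exact ⟨δ, hδ, hJ.1 _ hbad _ fun n hn hsub => hn ((enl_mono hBB₀ _).trans hsub)⟩

theorem iUnion_eq_univ_of_gamma (hcover : ∀ x : X, ∃ B ∈ 𝔅, x ∈ B) (hJ : IsIdeal J)
    (hγ : ∀ B ∈ 𝔅, ∃ δ : ℕ → ℝ, (∀ n, 0 < δ n) ∧ {n | ¬ enl B (δ n) ⊆ U n} ∈ J) :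
    ⋃ n, U n = univ := by
  refine eq_univ_of_forall fun x => ?_
  obtain ⟨B, hB, hxB⟩ := hcover x
  obtain ⟨δ, hδ, hbad⟩ := hγ B hB
  obtain ⟨n, hn⟩ : ∃ n, enl B (δ n) ⊆ U n := by
    by_contra! h
    exact hJ.2.2.2 (eq_univ_of_forall h ▸ hbad)
  exact mem_iUnion.2 ⟨n, hn (subset_enl B (hδ n) hxB)⟩

theorem IGammaCover.of_base (hcover : ∀ x : X, ∃ B ∈ 𝔅, x ∈ B) (hbase : IsBase 𝔅 𝔅₀)
    (hJ : IsIdeal J) (hU : ∀ n, IsOpen (U n))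
    (hγ : ∀ B ∈ 𝔅₀, ∃ δ : ℕ → ℝ, (∀ n, 0 < δ n) ∧ {n | ¬ enl B (δ n) ⊆ U n} ∈ J) :
    IGammaCover 𝔅 J U :=
  have hγ' := gamma_of_base hbase hJ hγ
  ⟨hU, iUnion_eq_univ_of_gamma hcover hJ hγ', hγ'⟩

end Gamma

universe u

theorem igamma_to_jgamma_of_card_general {X : Type u} [MetricSpace X]
    (𝔅 𝔅₀ : Set (Set X)) (hB : IsBornology 𝔅) (hbase : IsBase 𝔅 𝔅₀)
    (I J : Set (Set ℕ)) (hJ : IsIdeal J)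
    (hcard : ∀ 𝒜 : Set (Set ℕ), 𝒜 ⊆ I → Cardinal.lift.{u} (Cardinal.mk ↥𝒜) ≤ Cardinal.lift.{0} (Cardinal.mk ↥𝔅₀) →
      ∃ φ : ℕ → ℕ, ∀ A ∈ 𝒜, φ ⁻¹' A ∈ J)
    (V : ℕ → Set X) (hV : IGammaCover 𝔅 I V) :
    ∃ φ : ℕ → ℕ, IGammaCover 𝔅 J (fun m => V (φ m)) := by
  choose δ hδ hbad using fun B : 𝔅₀ => hV.2.2 B (hbase.1 B.2)
  obtain ⟨φ, hφ⟩ := hcard (range fun B : 𝔅₀ => {n | ¬ enl (B : Set X) (δ B n) ⊆ V n})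
    (range_subset_iff.2 hbad) Cardinal.mk_range_le_lift
  refine ⟨φ, IGammaCover.of_base hB.2.2 hbase hJ (fun m => hV.1 (φ m)) fun B hB₀ => ?_⟩
  exact ⟨fun m => δ ⟨B, hB₀⟩ (φ m), fun m => hδ _ _, hφ _ ⟨⟨B, hB₀⟩, rfl⟩⟩

theorem igamma_to_jgamma_of_card {X : Type u} [MetricSpace X]
    (𝔅 𝔅₀ : Set (Set X)) (hB : IsBornology 𝔅) (hbase : IsBase 𝔅 𝔅₀)
    (hclosed : ∀ B ∈ 𝔅₀, IsClosed B)
    (I J : Set (Set ℕ)) (hI : IsIdeal I) (hJ : IsIdeal J)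
    (hcard : ∀ 𝒜 : Set (Set ℕ), 𝒜 ⊆ I → Cardinal.lift.{u} (Cardinal.mk ↥𝒜) ≤ Cardinal.lift.{0} (Cardinal.mk ↥𝔅₀) →
      ∃ φ : ℕ → ℕ, ∀ A ∈ 𝒜, φ ⁻¹' A ∈ J)
    (V : ℕ → Set X) (hV : IGammaCover 𝔅 I V) :
    ∃ φ : ℕ → ℕ, IGammaCover 𝔅 J (fun m => V (φ m)) :=
  igamma_to_jgamma_of_card_general 𝔅 𝔅₀ hB hbase I J hJ hcard V hV
end
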